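/- Under overlap and ignorability, E[ (1−Z)·Y / (1−e(X)) ] = E[Y(0)]. -/

import Mathlib

open scoped Classical
open Finset

noncomputable def pr {Ω : Type*} [Fintype Ω] (P : Ω → ℝ) (A : Ω → Prop) : ℝ :=
  ∑ ω, if A ω then P ω else 0

noncomputable def expec {Ω : Type*} [Fintype Ω] (P : Ω → ℝ) (f : Ω → ℝ) : ℝ :=
  ∑ ω, P ω * f ω

noncomputable def cexp {Ω : Type*} [Fintype Ω] (P : Ω → ℝ) (f : Ω → ℝ) (A : Ω → Prop) : ℝ :=
  (∑ ω, if A ω then P ω * f ω else 0) / pr P A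

/-! Since `(1 - Z) * Y = (1 - Z) * Y0`, split the expectation over the strata `X = x`. On a null
stratum every weight vanishes. Otherwise `1 - e x = P(Z = 0 | X = x)`, and ignorability,
marginalised over `Y1` and summed against the values of `Y0`, gives
`E[Y0; Z = 0, X = x] = P(Z = 0 | X = x) * E[Y0; X = x]`, so the inverse weight cancels. -/

section

variable {Ω : Type*} [Fintype Ω] (P : Ω → ℝ)

lemma pr_nonneg (hP : ∀ ω, 0 ≤ P ω) (A : Ω → Prop) : 0 ≤ pr P A :=
  sum_nonneg fun ω _ => by split_ifs <;> simp [hP ω]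

lemma eq_zero_of_pr_eq_zero (hP : ∀ ω, 0 ≤ P ω) {A : Ω → Prop} (hA : pr P A = 0) {ω : Ω}
    (hω : A ω) : P ω = 0 := by
  simpa [hω] using
    (sum_eq_zero_iff_of_nonneg fun ω _ => by split_ifs <;> simp [hP ω]).mp hA ω (mem_univ ω)

lemma pr_eq_sum_pr_and_fiber {β : Type*} (f : Ω → β) (A : Ω → Prop) :
    pr P A = ∑ b ∈ univ.image f, pr P (fun ω => f ω = b ∧ A ω) := by
  unfold pr
  rw [← sum_fiberwise_of_maps_to (fun ω _ => mem_image_of_mem f (mem_univ ω))]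
  refine sum_congr rfl fun b _ => ?_
  rw [sum_filter]
  refine sum_congr rfl fun ω _ => ?_
  by_cases hb : f ω = b <;> simp [hb]

lemma sum_ite_mul_eq_sum_mul_pr (f : Ω → ℝ) (A : Ω → Prop) [DecidablePred A] :
    (∑ ω, if A ω then P ω * f ω else 0)
      = ∑ v ∈ univ.image f, v * pr P (fun ω => f ω = v ∧ A ω) := by
  rw [← sum_fiberwise_of_maps_to (fun ω _ => mem_image_of_mem f (mem_univ ω))]
  refine sum_congr rfl fun v _ => ?_
  rw [pr, mul_sum, sum_filter]
  refine sum_congr rfl fun ω _ => ?_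
  by_cases hv : f ω = v <;> by_cases hA : A ω <;> simp [hv, hA, mul_comm]

lemma pr_zero_and_add_pr_one_and {Z : Ω → ℝ} (hZ : ∀ ω, Z ω = 0 ∨ Z ω = 1) (C : Ω → Prop) :
    pr P (fun ω => Z ω = 0 ∧ C ω) + pr P (fun ω => Z ω = 1 ∧ C ω) = pr P C := by
  rw [pr, pr, pr, ← sum_add_distrib]
  refine sum_congr rfl fun ω _ => ?_
  rcases hZ ω with h | h <;> by_cases hC : C ω <;> simp [h, hC]

lemma pr_and_mul_eq_of_joint {α β : Type*} (g : Ω → α) (f : Ω → β) (A C : Ω → Prop) (c d : ℝ)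
    (h : ∀ a b, pr P (fun ω => g ω = a ∧ f ω = b ∧ A ω) * c
      = pr P (fun ω => g ω = a ∧ f ω = b ∧ C ω) * d) (b : β) :
    pr P (fun ω => f ω = b ∧ A ω) * c = pr P (fun ω => f ω = b ∧ C ω) * d := by
  rw [pr_eq_sum_pr_and_fiber P g, pr_eq_sum_pr_and_fiber P g, sum_mul, sum_mul]
  exact sum_congr rfl fun a _ => h a b

lemma sum_ite_and_mul_pr_eq_of_indep (f : Ω → ℝ) (B C : Ω → Prop) [DecidablePred B]
    [DecidablePred C]
    (hind : ∀ v, pr P (fun ω => f ω = v ∧ B ω ∧ C ω) * pr P C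
      = pr P (fun ω => f ω = v ∧ C ω) * pr P (fun ω => B ω ∧ C ω)) :
    (∑ ω, if B ω ∧ C ω then P ω * f ω else 0) * pr P C
      = (∑ ω, if C ω then P ω * f ω else 0) * pr P (fun ω => B ω ∧ C ω) := by
  rw [sum_ite_mul_eq_sum_mul_pr, sum_ite_mul_eq_sum_mul_pr, sum_mul, sum_mul]
  refine sum_congr rfl fun v _ => ?_
  rw [mul_assoc, mul_assoc, hind v]

lemma sum_ite_mul_ipw_eq (hP : ∀ ω, 0 ≤ P ω) {Z : Ω → ℝ} (hZ : ∀ ω, Z ω = 0 ∨ Z ω = 1)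
    (f : Ω → ℝ) (C : Ω → Prop) [DecidablePred C]
    (hind : ∀ v, pr P (fun ω => f ω = v ∧ Z ω = 0 ∧ C ω) * pr P C
      = pr P (fun ω => f ω = v ∧ C ω) * pr P (fun ω => Z ω = 0 ∧ C ω))
    (hoverlap : 0 < pr P C → pr P (fun ω => Z ω = 1 ∧ C ω) / pr P C < 1) :
    (∑ ω, if C ω then
        P ω * ((1 - Z ω) * f ω / (1 - pr P (fun ω => Z ω = 1 ∧ C ω) / pr P C)) else 0)
      = ∑ ω, if C ω then P ω * f ω else 0 := by
  rcases (pr_nonneg P hP C).eq_or_lt with hC | hC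
  · refine sum_congr rfl fun ω _ => ?_
    split_ifs with hω
    · simp [eq_zero_of_pr_eq_zero P hP hC.symm hω]
    · rfl
  have hcontrol : 1 - pr P (fun ω => Z ω = 1 ∧ C ω) / pr P C
      = pr P (fun ω => Z ω = 0 ∧ C ω) / pr P C := by
    rw [eq_div_iff hC.ne', sub_mul, div_mul_cancel₀ _ hC.ne']
    linarith [pr_zero_and_add_pr_one_and P hZ C]
  have hpos : 0 < pr P (fun ω => Z ω = 0 ∧ C ω) := by
    have := hoverlap hC
    rwa [← sub_pos, hcontrol, div_pos_iff_of_pos_right hC] at this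
  rw [hcontrol]
  calc _ = (∑ ω, if Z ω = 0 ∧ C ω then P ω * f ω else 0)
        / (pr P (fun ω => Z ω = 0 ∧ C ω) / pr P C) := by
        rw [sum_div]
        refine sum_congr rfl fun ω _ => ?_
        rcases hZ ω with h | h <;> by_cases hω : C ω <;> simp [h, hω, mul_div_assoc]
    _ = _ := by
      rw [div_eq_iff (div_pos hpos hC).ne', ← mul_div_assoc, eq_div_iff hC.ne',
        sum_ite_and_mul_pr_eq_of_indep P f _ C hind]

lemma expec_eq_sum_fiberwise {𝒳 : Type*} [Fintype 𝒳] (X : Ω → 𝒳) (g : 𝒳 → Ω → ℝ) :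
    expec P (fun ω => g (X ω) ω) = ∑ x, ∑ ω, if X ω = x then P ω * g x ω else 0 := by
  rw [expec, ← sum_fiberwise univ X]
  refine sum_congr rfl fun x _ => ?_
  rw [sum_filter]
  refine sum_congr rfl fun ω _ => ?_
  split_ifs with h
  · rw [h]
  · rfl

end

theorem ipw_identity_control_general {Ω 𝒳 : Type*} [Fintype Ω] [Fintype 𝒳]
    (P : Ω → ℝ) (hP : ∀ ω, 0 ≤ P ω)
    (X : Ω → 𝒳) (Z : Ω → ℝ) (Y1 Y0 Y : Ω → ℝ)
    (hZ : ∀ ω, Z ω = 0 ∨ Z ω = 1)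
    (consistency : ∀ ω, Y ω = Z ω * Y1 ω + (1 - Z ω) * Y0 ω)
    (e : 𝒳 → ℝ)
    (he : ∀ x, e x = pr P (fun ω => Z ω = 1 ∧ X ω = x) / pr P (fun ω => X ω = x))
    (overlap : ∀ x : 𝒳, 0 < pr P (fun ω => X ω = x) → e x < 1)
    (ignorability : ∀ (x : 𝒳) (z y1 y0 : ℝ),
      pr P (fun ω => Y1 ω = y1 ∧ Y0 ω = y0 ∧ Z ω = z ∧ X ω = x) * pr P (fun ω => X ω = x)
        = pr P (fun ω => Y1 ω = y1 ∧ Y0 ω = y0 ∧ X ω = x)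
            * pr P (fun ω => Z ω = z ∧ X ω = x)) :
    expec P (fun ω => (1 - Z ω) * Y ω / (1 - e (X ω))) = expec P Y0 := by
  have hY : ∀ ω, (1 - Z ω) * Y ω = (1 - Z ω) * Y0 ω := fun ω => by
    rcases hZ ω with h | h <;> simp [consistency ω, h]
  simp only [hY]
  rw [expec_eq_sum_fiberwise P X (fun x ω => (1 - Z ω) * Y0 ω / (1 - e x)),
    expec_eq_sum_fiberwise P X (fun _ => Y0)]
  refine sum_congr rfl fun x _ => ?_
  rw [he x]
  refine sum_ite_mul_ipw_eq P hP hZ Y0 _ (fun v => ?_) (fun hx => he x ▸ overlap x hx)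
  exact pr_and_mul_eq_of_joint P Y1 Y0 _ _ _ _ (fun y1 y0 => ignorability x 0 y1 y0) v

/-- Under overlap and ignorability, E[(1−Z)·Y/(1−e(X))] = E[Y(0)]. -/
theorem ipw_identity_control {Ω 𝒳 : Type*} [Fintype Ω] [Fintype 𝒳]
    (P : Ω → ℝ) (hP : ∀ ω, 0 ≤ P ω) (hP1 : ∑ ω, P ω = 1)
    (X : Ω → 𝒳) (Z : Ω → ℝ) (Y1 Y0 Y : Ω → ℝ)
    (hZ : ∀ ω, Z ω = 0 ∨ Z ω = 1)
    (consistency : ∀ ω, Y ω = Z ω * Y1 ω + (1 - Z ω) * Y0 ω)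
    (e : 𝒳 → ℝ)
    (he : ∀ x, e x = pr P (fun ω => Z ω = 1 ∧ X ω = x) / pr P (fun ω => X ω = x))
    (overlap : ∀ x : 𝒳, 0 < pr P (fun ω => X ω = x) → e x < 1)
    (ignorability : ∀ (x : 𝒳) (z y1 y0 : ℝ),
      pr P (fun ω => Y1 ω = y1 ∧ Y0 ω = y0 ∧ Z ω = z ∧ X ω = x) * pr P (fun ω => X ω = x)
        = pr P (fun ω => Y1 ω = y1 ∧ Y0 ω = y0 ∧ X ω = x)
            * pr P (fun ω => Z ω = z ∧ X ω = x)) :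
    expec P (fun ω => (1 - Z ω) * Y ω / (1 - e (X ω))) = expec P Y0 :=
  ipw_identity_control_general P hP X Z Y1 Y0 Y hZ consistency e he overlap ignorability
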